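/- In a finite orthomodular poset, for a nonempty subset X ⊆ A and an element p ∈ A, p → (X ⊙ p) = ⋃{Min U(q, p') : q ∈ X}; consequently X ≤₁ p → (X ⊙ p) and X ≤₂ p → (X ⊙ p). -/

import Mathlib

section
variable (A : Type*)

/-- Set of minimal upper bounds. -/
def MinU [PartialOrder A] (S : Set A) : Set A := {a | Minimal (· ∈ upperBounds S) a}

/-- Set of maximal lower bounds. -/
def MaxL [PartialOrder A] (S : Set A) : Set A := {a | Maximal (· ∈ lowerBounds S) a}

/-- An orthomodular poset: a bounded poset with an antitone involution that is a
complementation, such that orthogonal elements have a join and the orthomodular law holds. -/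
structure OMP [PartialOrder A] [BoundedOrder A] where
  compl : A → A
  compl_antitone : ∀ a b : A, a ≤ b → compl b ≤ compl a
  compl_involutive : ∀ a : A, compl (compl a) = a
  sup_compl : ∀ a : A, IsLUB {a, compl a} ⊤
  inf_compl : ∀ a : A, IsGLB {a, compl a} ⊥
  ortho_sup : ∀ a b : A, a ≤ compl b → ∃ c, IsLUB {a, b} c
  oml : ∀ a b m : A, a ≤ b → IsGLB {b, compl a} m → IsLUB {a, m} b

end

section
variable {A : Type*} [PartialOrder A] [BoundedOrder A]

/-- The inexact conjunction `a ⊙ b := Min U(a, b') ∧ b` (a set of elements). -/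
def odot (M : OMP A) (a b : A) : Set A :=
  {x | ∃ m ∈ MinU A {a, M.compl b}, IsGLB {m, b} x}

/-- The inexact implication `a → b := a' ∨ Max L(a, b)` (a set of elements). -/
def arrow (M : OMP A) (a b : A) : Set A :=
  {x | ∃ m ∈ MaxL A {a, b}, IsLUB {M.compl a, m} x}

/-- Extension of `⊙` to nonempty subsets. -/
def odotS (M : OMP A) (B C : Set A) : Set A := ⋃ b ∈ B, ⋃ c ∈ C, odot M b c

/-- Extension of `→` to nonempty subsets. -/
def arrowS (M : OMP A) (B C : Set A) : Set A := ⋃ b ∈ B, ⋃ c ∈ C, arrow M b c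

/-- `B ≤₁ C`: every element of `B` is below some element of `C`. -/
def le1 (B C : Set A) : Prop := ∀ b ∈ B, ∃ c ∈ C, b ≤ c

/-- `B ≤₂ C`: every element of `C` is above some element of `B`. -/
def le2 (B C : Set A) : Prop := ∀ c ∈ C, ∃ b ∈ B, b ≤ c

end

namespace OMP

variable {A : Type*} [PartialOrder A] [BoundedOrder A] (M : OMP A)

theorem le_compl_comm {a b : A} : a ≤ M.compl b ↔ b ≤ M.compl a := by
  refine ⟨fun h ↦ ?_, fun h ↦ ?_⟩
  · simpa only [M.compl_involutive] using M.compl_antitone _ _ h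
  · simpa only [M.compl_involutive] using M.compl_antitone _ _ h

theorem isGLB_compl_of_isLUB {a b x : A} (h : IsLUB {a, b} x) :
    IsGLB {M.compl a, M.compl b} (M.compl x) := by
  refine ⟨?_, fun y hy ↦ ?_⟩
  · rintro y (rfl | rfl) <;> exact M.compl_antitone _ _ (h.1 (by simp))
  · rw [M.le_compl_comm]
    refine h.2 ?_
    rintro z (rfl | rfl) <;> exact M.le_compl_comm.1 (hy (by simp))

theorem exists_isGLB_of_compl_le {a b : A} (h : M.compl b ≤ a) : ∃ c, IsGLB {a, b} c := by
  obtain ⟨s, hs⟩ := M.ortho_sup (M.compl a) (M.compl b) (M.compl_antitone _ _ h)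
  refine ⟨M.compl s, ?_⟩
  simpa only [M.compl_involutive] using M.isGLB_compl_of_isLUB hs

end OMP

section

variable {A : Type*} [PartialOrder A]

theorem maxL_pair_of_le {a b : A} (h : b ≤ a) : MaxL A {a, b} = {b} := by
  have hb : b ∈ lowerBounds ({a, b} : Set A) := by
    rintro z (rfl | rfl)
    exacts [h, le_rfl]
  ext n
  refine ⟨fun hn ↦ le_antisymm (hn.1 (by simp)) (hn.2 hb (hn.1 (by simp))), ?_⟩
  rintro rfl
  exact ⟨hb, fun y hy _ ↦ hy (by simp)⟩

theorem le_of_mem_minU {S : Set A} {a m : A} (ha : a ∈ S) (hm : m ∈ MinU A S) : a ≤ m :=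
  hm.1 ha

theorem minU_nonempty [OrderTop A] [WellFoundedLT A] (S : Set A) : (MinU A S).Nonempty :=
  let ⟨m, _, hm⟩ := exists_minimal_le_of_wellFoundedLT (· ∈ upperBounds S) ⊤ (fun _ _ ↦ le_top)
  ⟨m, hm⟩

end

section

variable {A : Type*} [PartialOrder A] [BoundedOrder A] (M : OMP A)

/-- The orthomodular law applied to `p' ≤ m`: `m = p' ∨ (m ∧ p)`. -/
theorem arrow_eq_singleton_of_isGLB {p m c : A} (hpm : M.compl p ≤ m)
    (hc : IsGLB {m, p} c) : arrow M p c = {m} := by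
  have hcp : c ≤ p := hc.1 (by simp)
  have hm : IsLUB {M.compl p, c} m :=
    M.oml _ _ _ hpm (by rwa [M.compl_involutive])
  ext x
  simp only [arrow, maxL_pair_of_le hcp, Set.mem_singleton_iff, exists_eq_left,
    Set.mem_ofPred_eq]
  exact ⟨fun hx ↦ hx.unique hm, fun hx ↦ hx ▸ hm⟩

theorem arrowS_singleton_odot (p q : A) :
    arrowS M {p} (odot M q p) = MinU A {q, M.compl p} := by
  ext x
  simp only [arrowS, odot, Set.mem_iUnion, Set.mem_singleton_iff, exists_prop,
    exists_eq_left, Set.mem_ofPred_eq]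
  constructor
  · rintro ⟨c, ⟨m, hm, hc⟩, hx⟩
    rw [arrow_eq_singleton_of_isGLB M (le_of_mem_minU (by simp) hm) hc] at hx
    exact hx ▸ hm
  · intro hx
    have hpx : M.compl p ≤ x := le_of_mem_minU (by simp) hx
    obtain ⟨c, hc⟩ := M.exists_isGLB_of_compl_le hpx
    exact ⟨c, ⟨x, hx, hc⟩, by simp [arrow_eq_singleton_of_isGLB M hpx hc]⟩

theorem arrowS_singleton_odotS_singleton (X : Set A) (p : A) :
    arrowS M {p} (odotS M X {p}) = ⋃ q ∈ X, MinU A {q, M.compl p} := by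
  simp_rw [← arrowS_singleton_odot]
  ext x
  simp only [arrowS, odotS, Set.mem_iUnion, Set.mem_singleton_iff, exists_prop,
    exists_eq_left]
  exact ⟨fun ⟨c, ⟨q, hq, hc⟩, hx⟩ ↦ ⟨q, hq, c, hc, hx⟩,
    fun ⟨q, hq, c, hc, hx⟩ ↦ ⟨c, ⟨q, hq, hc⟩, hx⟩⟩

end

theorem stmt_5_general {A : Type*} [PartialOrder A] [BoundedOrder A] [Finite A] (M : OMP A)
    (X : Set A) (p : A) :
    arrowS M {p} (odotS M X {p}) = (⋃ q ∈ X, MinU A {q, M.compl p}) ∧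
    le1 X (arrowS M {p} (odotS M X {p})) ∧
    le2 X (arrowS M {p} (odotS M X {p})) := by
  rw [arrowS_singleton_odotS_singleton]
  refine ⟨rfl, fun q hq ↦ ?_, fun x hx ↦ ?_⟩
  · obtain ⟨m, hm⟩ := minU_nonempty ({q, M.compl p} : Set A)
    exact ⟨m, Set.mem_biUnion hq hm, le_of_mem_minU (by simp) hm⟩
  · obtain ⟨q, hq, hm⟩ := Set.mem_iUnion₂.1 hx
    exact ⟨q, hq, le_of_mem_minU (by simp) hm⟩

/-- For a nonempty subset `X` and an element `p` of a finite orthomodular poset,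
`p → (X ⊙ p) = ⋃ {Min U(q, p') : q ∈ X}`; consequently `X ≤₁ p → (X ⊙ p)` and
`X ≤₂ p → (X ⊙ p)`. -/
theorem stmt_5 {A : Type*} [PartialOrder A] [BoundedOrder A] [Finite A] (M : OMP A)
    (X : Set A) (hX : X.Nonempty) (p : A) :
    arrowS M {p} (odotS M X {p}) = (⋃ q ∈ X, MinU A {q, M.compl p}) ∧
    le1 X (arrowS M {p} (odotS M X {p})) ∧
    le2 X (arrowS M {p} (odotS M X {p})) :=
  stmt_5_general M X p
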